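/- arXiv:2208.00844 — 3 statements merged into one kernel-verified Lean document; each statement's English description precedes it below -/
import Mathlib

section
/- (Lemma on reduction with Sig-tail-irreducible reductors.) Let f ∈ P^m with φ(f) ≠ 0, let s be a module term or ∞, let D ⊆ T(φ(f)), and write R := T_{G,s,D}(f). For every t ∈ R let m_t ∈ P^m satisfy: LT(φ(m_t)) = t, LC(φ(m_t)) = 1, sig(m_t) ≺ s, and m_t is Sig-tail-irreducible w.r.t. G up to s. Set f′ := f − Σ_{t ∈ R} C_t(φ(f))·m_t. Then: (a) for every enumeration t₁,…,t_k of R and every 0 ≤ j < k, the partial result f_j := f − Σ_{i ≤ j} C_{t_i}(φ(f))·m_{t_i} satisfies C_{t_{j+1}}(φ(f_j)) = C_{t_{j+1}}(φ(f)) ≠ 0, so each subtraction cancels exactly the term t_{j+1} of φ(f_j); and (b) no term of D lying in T(φ(f′)) is Sig-reducible w.r.t. G up to s, i.e. T_{G,s,D∩T(φ(f′))}(f′) = ∅. -/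
open MvPolynomial

/-- A term (power product) identified with its exponent vector in `ℕⁿ`;
the product of terms corresponds tord addition of exponent vectors. -/
abbrev Term (n : ℕ) := Fin n →₀ ℕ

/-- A module term `t·eᵢ` identified with the pair `(t, i)`. -/
abbrev MTerm (n m : ℕ) := (Fin n →₀ ℕ) × Fin m

/-- A monomial order on terms: a linear order with `1 ≤ t` for every term `t`,
compatible with term multiplication (= addition of exponent vectors). -/
structure TermOrder (n : ℕ) where
  le : Term n → Term n → Prop
  linear : IsLinearOrder (Term n) le
  bot : ∀ t : Term n, le 0 t
  add_le_add : ∀ u v w : Term n, le u v → le (w + u) (w + v)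

/-- A compatible order extension `⪯` of a monomial order tord module terms:
a linear order whose strict part is well-founded, satisfying
(i) `u ≤ v → u·eᵢ ⪯ v·eᵢ` and (ii) `t·eᵢ ⪯ t′·eⱼ → (u·t)·eᵢ ⪯ (u·t′)·eⱼ`. -/
structure ModOrder (n m : ℕ) (tord : TermOrder n) where
  le : MTerm n m → MTerm n m → Prop
  linear : IsLinearOrder (MTerm n m) le
  wf : WellFounded (fun a b : MTerm n m => le a b ∧ a ≠ b)
  compat : ∀ u v : Term n, tord.le u v → ∀ i : Fin m, le (u, i) (v, i)
  stable : ∀ (t t' : Term n) (i j : Fin m) (u : Term n),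
      le (t, i) (t', j) → le (u + t, i) (u + t', j)

variable {F : Type*} [Field F] {n m : ℕ}

/-- `IsLT tord f t` : `t` is the leading term of the polynomial `f` w.r.t. `tord`. -/
def IsLT (tord : TermOrder n) (f : MvPolynomial (Fin n) F) (t : Term n) : Prop :=
  t ∈ f.support ∧ ∀ u ∈ f.support, tord.le u t

/-- The module homomorphism `φ : P^m → P`, `(p₁,…,p_m) ↦ Σᵢ pᵢ·fᵢ`. -/
noncomputable def phi (fs : Fin m → MvPolynomial (Fin n) F)
    (f : Fin m → MvPolynomial (Fin n) F) : MvPolynomial (Fin n) F :=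
  ∑ i, f i * fs i

/-- The set of module terms occurring in a module element with nonzero coefficient. -/
def msupport (f : Fin m → MvPolynomial (Fin n) F) : Set (MTerm n m) :=
  {σ | MvPolynomial.coeff σ.1 (f σ.2) ≠ 0}

/-- `IsSig mo f σ` : `σ` is the signature of `f`, i.e. the `⪯`-largest module term of `f`. -/
def IsSig {tord : TermOrder n} (mo : ModOrder n m tord)
    (f : Fin m → MvPolynomial (Fin n) F) (σ : MTerm n m) : Prop :=
  σ ∈ msupport f ∧ ∀ τ ∈ msupport f, mo.le τ σ

/-- Multiplication of a module element by a term `u`. -/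
noncomputable def tmul (u : Term n) (f : Fin m → MvPolynomial (Fin n) F) :
    Fin m → MvPolynomial (Fin n) F :=
  fun i => MvPolynomial.monomial u (1 : F) * f i

/-- The strict part `≺` of `⪯`. -/
def mlt {tord : TermOrder n} (mo : ModOrder n m tord) (a b : MTerm n m) : Prop :=
  mo.le a b ∧ a ≠ b

/-- `σ ≺ s` where `s` is a module term or the formal symbol `∞ = ⊤`
(with `r ≺ ∞` for every module term `r`). -/
def ltE {tord : TermOrder n} (mo : ModOrder n m tord) (σ : MTerm n m)
    (s : WithTop (MTerm n m)) : Prop :=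
  ∀ τ : MTerm n m, s = ↑τ → mlt mo σ τ

/-- `σ ⪯ s` where `s` is a module term or the formal symbol `∞ = ⊤`. -/
def leE {tord : TermOrder n} (mo : ModOrder n m tord) (σ : MTerm n m)
    (s : WithTop (MTerm n m)) : Prop :=
  ∀ τ : MTerm n m, s = ↑τ → mo.le σ τ

/-- A term `t` is Sig-reducible w.r.t. `G` up tord `s` if there are `g ∈ G` and a term `u`
with `LT(φ(u·g)) = t` and `sig(u·g) ≺ s`. -/
def SigRedTerm (tord : TermOrder n) (mo : ModOrder n m tord)
    (fs : Fin m → MvPolynomial (Fin n) F)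
    (G : Finset (Fin m → MvPolynomial (Fin n) F))
    (s : WithTop (MTerm n m)) (t : Term n) : Prop :=
  ∃ g ∈ G, ∃ (u : Term n) (σ : MTerm n m),
    IsLT tord (phi fs (tmul u g)) t ∧ IsSig mo (tmul u g) σ ∧ ltE mo σ s

/-- `h` is Sig-tail-irreducible w.r.t. `G` up tord `s` : no term of `Tail(φ(h))`
is Sig-reducible w.r.t. `G` up tord `s`. -/
def SigTailIrred (tord : TermOrder n) (mo : ModOrder n m tord)
    (fs : Fin m → MvPolynomial (Fin n) F)
    (G : Finset (Fin m → MvPolynomial (Fin n) F))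
    (h : Fin m → MvPolynomial (Fin n) F) (s : WithTop (MTerm n m)) : Prop :=
  ∀ lt : Term n, IsLT tord (phi fs h) lt →
    ∀ t ∈ (phi fs h).support, t ≠ lt → ¬ SigRedTerm tord mo fs G s t

/-- A Sig-reduction step on `f` w.r.t. `G` at the term `t ∈ T(φ(f))`, producing `f'`. -/
def SigRedStepAt (tord : TermOrder n) (mo : ModOrder n m tord)
    (fs : Fin m → MvPolynomial (Fin n) F)
    (G : Finset (Fin m → MvPolynomial (Fin n) F))
    (t : Term n) (f f' : Fin m → MvPolynomial (Fin n) F) : Prop :=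
  ∃ g ∈ G, ∃ (u lg : Term n) (σf σug : MTerm n m),
    t ∈ (phi fs f).support ∧ IsLT tord (phi fs g) lg ∧ t = u + lg ∧
    IsSig mo f σf ∧ IsSig mo (tmul u g) σug ∧ mo.le σug σf ∧
    f' = f - (MvPolynomial.coeff t (phi fs f) / MvPolynomial.coeff lg (phi fs g)) • tmul u g

/-- A regular Sig-reduction step at `t` : additionally `sig(u·g) ≺ sig(f)`. -/
def RegSigRedStepAt (tord : TermOrder n) (mo : ModOrder n m tord)
    (fs : Fin m → MvPolynomial (Fin n) F)
    (G : Finset (Fin m → MvPolynomial (Fin n) F))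
    (t : Term n) (f f' : Fin m → MvPolynomial (Fin n) F) : Prop :=
  ∃ g ∈ G, ∃ (u lg : Term n) (σf σug : MTerm n m),
    t ∈ (phi fs f).support ∧ IsLT tord (phi fs g) lg ∧ t = u + lg ∧
    IsSig mo f σf ∧ IsSig mo (tmul u g) σug ∧ mlt mo σug σf ∧
    f' = f - (MvPolynomial.coeff t (phi fs f) / MvPolynomial.coeff lg (phi fs g)) • tmul u g

/-- A Sig-reduction step on `f` w.r.t. `G`. -/
def SigRedStep (tord : TermOrder n) (mo : ModOrder n m tord)
    (fs : Fin m → MvPolynomial (Fin n) F)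
    (G : Finset (Fin m → MvPolynomial (Fin n) F))
    (f f' : Fin m → MvPolynomial (Fin n) F) : Prop :=
  ∃ t : Term n, SigRedStepAt tord mo fs G t f f'

/-- A regular Sig-reduction step on `f` w.r.t. `G`. -/
def RegSigRedStep (tord : TermOrder n) (mo : ModOrder n m tord)
    (fs : Fin m → MvPolynomial (Fin n) F)
    (G : Finset (Fin m → MvPolynomial (Fin n) F))
    (f f' : Fin m → MvPolynomial (Fin n) F) : Prop :=
  ∃ t : Term n, RegSigRedStepAt tord mo fs G t f f'

/-- `f` Sig-reduces tord zero w.r.t. `G` : `f →_{G,∗} h` for some syzygy `h`. -/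
def SigReducesToZero (tord : TermOrder n) (mo : ModOrder n m tord)
    (fs : Fin m → MvPolynomial (Fin n) F)
    (G : Finset (Fin m → MvPolynomial (Fin n) F))
    (f : Fin m → MvPolynomial (Fin n) F) : Prop :=
  ∃ h, Relation.ReflTransGen (SigRedStep tord mo fs G) f h ∧ phi fs h = 0

/-- `G` is a Sig-Gröbner basis up tord the module term `s` :
every nonzero `f` with `sig(f) ≺ s` Sig-reduces tord zero w.r.t. `G`. -/
def SigGBUpTo (tord : TermOrder n) (mo : ModOrder n m tord)
    (fs : Fin m → MvPolynomial (Fin n) F)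
    (G : Finset (Fin m → MvPolynomial (Fin n) F)) (s : MTerm n m) : Prop :=
  ∀ f σ, f ≠ 0 → IsSig mo f σ → mlt mo σ s → SigReducesToZero tord mo fs G f

/-- `q` is a regular Sig-normal form of `p` w.r.t. `G`. -/
def RegNF (tord : TermOrder n) (mo : ModOrder n m tord)
    (fs : Fin m → MvPolynomial (Fin n) F)
    (G : Finset (Fin m → MvPolynomial (Fin n) F))
    (p q : Fin m → MvPolynomial (Fin n) F) : Prop :=
  Relation.ReflTransGen (RegSigRedStep tord mo fs G) p q ∧
    ∀ q', ¬ RegSigRedStep tord mo fs G q q'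

/-- `h` is singularly Sig-top-reducible w.r.t. `G` : a singular Sig-top-reduction step
applies tord `h`. -/
def SingTopReducible (tord : TermOrder n) (mo : ModOrder n m tord)
    (fs : Fin m → MvPolynomial (Fin n) F)
    (G : Finset (Fin m → MvPolynomial (Fin n) F))
    (h : Fin m → MvPolynomial (Fin n) F) : Prop :=
  ∃ t : Term n, IsLT tord (phi fs h) t ∧
    ∃ g ∈ G, ∃ (u lg : Term n) (σh σug : MTerm n m),
      IsLT tord (phi fs g) lg ∧ t = u + lg ∧
      IsSig mo h σh ∧ IsSig mo (tmul u g) σug ∧ σug = σh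

/-- The least common multiple of two terms: the pointwise maximum of exponent vectors. -/
noncomputable def lcmTerm (a b : Term n) : Term n := Finsupp.zipWith max (max_self 0) a b

/-- `p` is the S-pair of `f` and `g` and this S-pair is regular. -/
def IsRegSpair (tord : TermOrder n) (mo : ModOrder n m tord)
    (fs : Fin m → MvPolynomial (Fin n) F)
    (f g p : Fin m → MvPolynomial (Fin n) F) : Prop :=
  ∃ lf lg : Term n, IsLT tord (phi fs f) lf ∧ IsLT tord (phi fs g) lg ∧
    (∀ σ₁ σ₂ : MTerm n m, IsSig mo (tmul (lcmTerm lf lg - lf) f) σ₁ →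
      IsSig mo (tmul (lcmTerm lf lg - lg) g) σ₂ → σ₁ ≠ σ₂) ∧
    p = (MvPolynomial.coeff lf (phi fs f))⁻¹ • tmul (lcmTerm lf lg - lf) f
      - (MvPolynomial.coeff lg (phi fs g))⁻¹ • tmul (lcmTerm lf lg - lg) g

/-- `T_G(f)` : the set of terms of `f` that are reducible w.r.t. the set `G`
of nonzero polynomials. -/
def TRed (tord : TermOrder n) (G : Finset (MvPolynomial (Fin n) F))
    (f : MvPolynomial (Fin n) F) : Set (Term n) :=
  {t | t ∈ f.support ∧ ∃ g ∈ G, ∃ lg u : Term n, IsLT tord g lg ∧ t = u + lg}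

/-- An ordinary reduction step on a polynomial `p` w.r.t. the polynomials `φ(g)`, `g ∈ G`. -/
noncomputable def OrdRedStep (tord : TermOrder n)
    (fs : Fin m → MvPolynomial (Fin n) F)
    (G : Finset (Fin m → MvPolynomial (Fin n) F))
    (p p' : MvPolynomial (Fin n) F) : Prop :=
  ∃ g ∈ G, ∃ (u lg : Term n),
    IsLT tord (phi fs g) lg ∧ (u + lg) ∈ p.support ∧
    p' = p - (MvPolynomial.coeff (u + lg) p / MvPolynomial.coeff lg (phi fs g)) •
      (MvPolynomial.monomial u (1 : F) * phi fs g)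

lemma phi_add (fs : Fin m → MvPolynomial (Fin n) F)
    (a b : Fin m → MvPolynomial (Fin n) F) :
    phi fs (a + b) = phi fs a + phi fs b := by
  simp [phi, add_mul, Finset.sum_add_distrib]

lemma phi_sub (fs : Fin m → MvPolynomial (Fin n) F)
    (a b : Fin m → MvPolynomial (Fin n) F) :
    phi fs (a - b) = phi fs a - phi fs b := by
  simp [phi, sub_mul, Finset.sum_sub_distrib]

lemma phi_smul (fs : Fin m → MvPolynomial (Fin n) F) (c : F)
    (a : Fin m → MvPolynomial (Fin n) F) :
    phi fs (c • a) = c • phi fs a := by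
  simp [phi, Finset.smul_sum, smul_mul_assoc]

lemma phi_zero (fs : Fin m → MvPolynomial (Fin n) F) :
    phi fs (0 : Fin m → MvPolynomial (Fin n) F) = 0 := by
  simp [phi]

lemma coeff_phi_listsum (fs : Fin m → MvPolynomial (Fin n) F) (t : Term n)
    (g : Term n → (Fin m → MvPolynomial (Fin n) F)) (l : List (Term n)) :
    MvPolynomial.coeff t (phi fs (l.map g).sum)
      = (l.map (fun x => MvPolynomial.coeff t (phi fs (g x)))).sum := by
  induction l with
  | nil => simp [phi_zero]
  | cons a l ih => simp [phi_add, MvPolynomial.coeff_add, ih]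

lemma coeff_phi_finsum (fs : Fin m → MvPolynomial (Fin n) F) (t : Term n)
    (g : Term n → (Fin m → MvPolynomial (Fin n) F)) (R : Finset (Term n)) :
    MvPolynomial.coeff t (phi fs (∑ x ∈ R, g x))
      = ∑ x ∈ R, MvPolynomial.coeff t (phi fs (g x)) := by
  classical
  induction R using Finset.induction with
  | empty => simp [phi_zero]
  | insert _ _ ha ih =>
    rw [Finset.sum_insert ha, Finset.sum_insert ha, phi_add,
      MvPolynomial.coeff_add, ih]

/-- Lemma on reduction with Sig-tail-irreducible reductors.
With `R = T_{G,s,D}(f)` and monic reductors `m_t` (`t ∈ R`) of signature `≺ s`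
that are Sig-tail-irreducible up to `s`, set `f′ = f − Σ_{t∈R} C_t(φ(f))·m_t`. Then
(a) along any enumeration of `R`, each partial subtraction cancels exactly the next
term of `R`, whose coefficient is still that of `φ(f)` and nonzero; and
(b) no term of `D` occurring in `φ(f′)` is Sig-reducible w.r.t. `G` up to `s`. -/
theorem statement1 {F : Type*} [Field F] {n m : ℕ} (hn : 0 < n) (hm : 0 < m)
    (tord : TermOrder n) (mo : ModOrder n m tord)
    (fs : Fin m → MvPolynomial (Fin n) F) (hfs : ∀ i, fs i ≠ 0)
    (G : Finset (Fin m → MvPolynomial (Fin n) F))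
    (hG0 : ∀ g ∈ G, g ≠ 0) (hGphi : ∀ g ∈ G, phi fs g ≠ 0)
    (f : Fin m → MvPolynomial (Fin n) F) (hf : phi fs f ≠ 0)
    (s : WithTop (MTerm n m))
    (D : Finset (Term n)) (hD : D ⊆ (phi fs f).support)
    (R : Finset (Term n))
    (hR : ∀ t, t ∈ R ↔ t ∈ D ∧ SigRedTerm tord mo fs G s t)
    (M : Term n → (Fin m → MvPolynomial (Fin n) F))
    (hM : ∀ t ∈ R, IsLT tord (phi fs (M t)) t ∧
      MvPolynomial.coeff t (phi fs (M t)) = 1 ∧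
      (∃ σ, IsSig mo (M t) σ ∧ ltE mo σ s) ∧
      SigTailIrred tord mo fs G (M t) s) :
    (∀ l : List (Term n), l.Nodup → l.toFinset = R →
      ∀ j : Fin l.length,
        MvPolynomial.coeff (l.get j)
            (phi fs (f - ((l.take j.1).map
              (fun t => MvPolynomial.coeff t (phi fs f) • M t)).sum))
          = MvPolynomial.coeff (l.get j) (phi fs f) ∧
        MvPolynomial.coeff (l.get j) (phi fs f) ≠ 0 ∧
        MvPolynomial.coeff (l.get j)
            (phi fs (f - ((l.take (j.1 + 1)).map
              (fun t => MvPolynomial.coeff t (phi fs f) • M t)).sum)) = 0) ∧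
    (∀ t ∈ D,
      MvPolynomial.coeff t
          (phi fs (f - ∑ t' ∈ R, MvPolynomial.coeff t' (phi fs f) • M t')) ≠ 0 →
        ¬ SigRedTerm tord mo fs G s t) := by
  classical
  -- Key fact: if t ∈ R and t' ∈ R with t ≠ t', then coeff t (φ (M t')) = 0.
  have key : ∀ t ∈ R, ∀ t' ∈ R, t ≠ t' →
      MvPolynomial.coeff t (phi fs (M t')) = 0 := by
    intro t ht t' ht' hne
    by_contra h
    have hsupp : t ∈ (phi fs (M t')).support := MvPolynomial.mem_support_iff.mpr h
    have hM' := hM t' ht'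
    exact hM'.2.2.2 t' hM'.1 t hsupp hne ((hR t).mp ht).2
  constructor
  · intro l hnd hlR j
    have hmemR : ∀ x ∈ l, x ∈ R := by
      intro x hx; rw [← hlR]; exact List.mem_toFinset.mpr hx
    have hjR : l.get j ∈ R := hmemR _ (List.get_mem l j)
    have hjD : l.get j ∈ D := ((hR _).mp hjR).1
    have hne0 : MvPolynomial.coeff (l.get j) (phi fs f) ≠ 0 :=
      MvPolynomial.mem_support_iff.mp (hD hjD)
    -- coefficient of l.get j in φ(M x) is 0 for x in any sublist avoiding index j
    have hprefix : ∀ k : ℕ, k ≤ j.1 → ∀ x ∈ l.take k,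
        MvPolynomial.coeff (l.get j) (phi fs (M x)) = 0 := by
      intro k hk x hx
      have hxl : x ∈ l := List.mem_of_mem_take hx
      apply key _ hjR _ (hmemR _ hxl)
      intro hEq
      obtain ⟨i, hi, hix⟩ := List.getElem_of_mem hx
      have hilen : i < l.length := by
        have := hi
        simp only [List.length_take] at this
        omega
      have hij : i < j.1 := by
        have := hi
        simp only [List.length_take] at this
        omega
      have hxi : l[i] = x := by
        rw [← hix]; exact (List.getElem_take ..).symm
      have : l[i] = l[j.1] := by
        rw [hxi, ← hEq]; rfl
      have := (List.Nodup.getElem_inj_iff hnd).mp this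
      omega
    have hcoe : ∀ k : ℕ, k ≤ j.1 →
        MvPolynomial.coeff (l.get j)
          (phi fs (f - ((l.take k).map
            (fun t => MvPolynomial.coeff t (phi fs f) • M t)).sum))
        = MvPolynomial.coeff (l.get j) (phi fs f) := by
      intro k hk
      rw [phi_sub, MvPolynomial.coeff_sub, coeff_phi_listsum]
      have : ∀ x ∈ l.take k,
          MvPolynomial.coeff (l.get j)
            (phi fs (MvPolynomial.coeff x (phi fs f) • M x)) = 0 := by
        intro x hx
        rw [phi_smul, MvPolynomial.coeff_smul, hprefix k hk x hx, smul_zero]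
      rw [List.sum_eq_zero (by
        intro y hy
        obtain ⟨x, hx, rfl⟩ := List.mem_map.mp hy
        exact this x hx)]
      ring
    refine ⟨hcoe j.1 le_rfl, hne0, ?_⟩
    have htake : l.take (j.1 + 1)
        = l.take j.1 ++ [l.get j] := by
      rw [List.take_succ]
      congr 1
      simp [List.getElem?_eq_getElem j.2]
    rw [phi_sub, MvPolynomial.coeff_sub, htake, List.map_append, List.sum_append,
      phi_add, MvPolynomial.coeff_add, coeff_phi_listsum]
    have h1 : (List.map (fun x => MvPolynomial.coeff (l.get j)
        (phi fs (MvPolynomial.coeff x (phi fs f) • M x))) (l.take j.1)).sum = 0 := by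
      apply List.sum_eq_zero
      intro y hy
      obtain ⟨x, hx, rfl⟩ := List.mem_map.mp hy
      rw [phi_smul, MvPolynomial.coeff_smul, hprefix j.1 le_rfl x hx, smul_zero]
    rw [h1]
    simp only [List.get_eq_getElem] at *
    simp [phi_smul, MvPolynomial.coeff_smul, (hM _ hjR).2.1]
  · intro t htD hcoeff
    by_contra hred
    have htR : t ∈ R := (hR t).mpr ⟨htD, hred⟩
    apply hcoeff
    rw [phi_sub, MvPolynomial.coeff_sub, coeff_phi_finsum]
    rw [Finset.sum_eq_single t
      (fun b hb hbt => by
        rw [phi_smul, MvPolynomial.coeff_smul, key t htR b hb (Ne.symm hbt), smul_zero])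
      (fun h => absurd htR h)]
    rw [phi_smul, MvPolynomial.coeff_smul, (hM t htR).2.1, smul_eq_mul, mul_one, sub_self]
end

section
/- (Uniqueness of regularly Sig-irreducible elements of a given signature.) Let s be a module term and let G be a Sig-Gröbner basis up to s. If f, g ∈ P^m are nonzero, both regularly Sig-irreducible with respect to G, and sig(f) = sig(g) = s, then there exists a nonzero scalar c ∈ F with φ(f) = c·φ(g). -/
open MvPolynomial

variable {F : Type*} [Field F] {n m : ℕ}

/-!
Scale `f` and `g` so that their coefficients at the common signature `s` agree and subtract:
`h := b • f - a • g` has all its module terms strictly below `s`. If `φ(h) ≠ 0`, then `h`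
Sig-reduces to zero since `G` is a Sig-Gröbner basis up to `s`, so its first reduction step
reduces a term `t` of `φ(h)` by some `u·g'` with `sig(u·g') ⪯ sig(h) ≺ s`. But `t` is a term of
`φ(f)` or of `φ(g)`, where the same `u·g'` would be a regular reduction step, contradicting
the irreducibility of `f` and `g`. Hence `b • φ(f) = a • φ(g)`.
-/

section Signature

variable {tord : TermOrder n} (mo : ModOrder n m tord)

lemma IsSig.unique {f : Fin m → MvPolynomial (Fin n) F} {σ τ : MTerm n m}
    (hσ : IsSig mo f σ) (hτ : IsSig mo f τ) : σ = τ :=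
  have := mo.linear
  antisymm (hτ.2 σ hσ.1) (hσ.2 τ hτ.1)

lemma mlt_of_le_of_mlt {σ τ ρ : MTerm n m} (hστ : mo.le σ τ) (hτρ : mlt mo τ ρ) :
    mlt mo σ ρ :=
  have := mo.linear
  ⟨_root_.trans hστ hτρ.1, fun h => hτρ.2 (antisymm hτρ.1 (h ▸ hστ))⟩

lemma exists_isSig {h : Fin m → MvPolynomial (Fin n) F} (hh : h ≠ 0) : ∃ σ, IsSig mo h σ := by
  have := mo.linear
  let term : (Σ i, (h i).support) → MTerm n m := fun p => (p.2.1, p.1)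
  have : Nonempty (Σ i, (h i).support) := by
    obtain ⟨i, hi⟩ := Function.ne_iff.mp hh
    obtain ⟨t, ht⟩ := support_nonempty.mpr hi
    exact ⟨⟨i, t, ht⟩⟩
  obtain ⟨z, hz⟩ := (Std.Total.directed (r := mo.le) term).finset_le Finset.univ
  exact ⟨term z, mem_support_iff.mp z.2.2,
    fun τ hτ => hz ⟨τ.2, τ.1, mem_support_iff.mpr hτ⟩ (Finset.mem_univ _)⟩

lemma mlt_of_mem_msupport_smul_sub_smul {f g : Fin m → MvPolynomial (Fin n) F} {s : MTerm n m}
    (hsf : IsSig mo f s) (hsg : IsSig mo g s) {τ : MTerm n m}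
    (hτ : τ ∈ msupport (coeff s.1 (g s.2) • f - coeff s.1 (f s.2) • g)) : mlt mo τ s := by
  simp only [msupport, Set.mem_ofPred_eq, Pi.sub_apply, Pi.smul_apply, coeff_sub, coeff_smul,
    smul_eq_mul] at hτ
  refine ⟨?_, ?_⟩
  · by_cases hf : coeff τ.1 (f τ.2) = 0
    · exact hsg.2 τ (fun hg => hτ (by rw [hf, hg]; ring))
    · exact hsf.2 τ hf
  · rintro rfl
    exact hτ (by ring)

end Signature

lemma phi_smul_sub_smul (fs f g : Fin m → MvPolynomial (Fin n) F) (a b : F) :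
    phi fs (a • f - b • g) = a • phi fs f - b • phi fs g := by
  simp only [phi, Pi.sub_apply, Pi.smul_apply, sub_mul, smul_mul_assoc, Finset.sum_sub_distrib,
    Finset.smul_sum]

lemma ne_zero_of_phi_ne_zero {fs h : Fin m → MvPolynomial (Fin n) F} (hh : phi fs h ≠ 0) :
    h ≠ 0 := by
  rintro rfl
  simp [phi] at hh

lemma SigGBUpTo.exists_reducer {tord : TermOrder n} {mo : ModOrder n m tord}
    {fs : Fin m → MvPolynomial (Fin n) F} {G : Finset (Fin m → MvPolynomial (Fin n) F)}
    {s : MTerm n m} (hGB : SigGBUpTo tord mo fs G s) {h : Fin m → MvPolynomial (Fin n) F}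
    {σ : MTerm n m} (hσ : IsSig mo h σ) (hσs : mlt mo σ s) (hh : phi fs h ≠ 0) :
    ∃ t ∈ (phi fs h).support, ∃ g ∈ G, ∃ (u lg : Term n) (τ : MTerm n m),
      IsLT tord (phi fs g) lg ∧ t = u + lg ∧ IsSig mo (tmul u g) τ ∧ mlt mo τ s := by
  obtain ⟨h', hchain, hh'⟩ := hGB h σ (ne_zero_of_phi_ne_zero hh) hσ hσs
  rcases hchain.cases_head with
    rfl | ⟨_, ⟨t, g, hg, u, lg, σ', τ, ht, hlg, rfl, hσ', hτ, hτσ', -⟩, -⟩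
  · exact absurd hh' hh
  · rw [hσ'.unique mo hσ] at hτσ'
    exact ⟨_, ht, g, hg, u, lg, τ, hlg, rfl, hτ, mlt_of_le_of_mlt mo hτσ' hσs⟩

theorem statement5_general {F : Type*} [Field F] {n m : ℕ}
    (tord : TermOrder n) (mo : ModOrder n m tord)
    (fs : Fin m → MvPolynomial (Fin n) F)
    (G : Finset (Fin m → MvPolynomial (Fin n) F))
    (s : MTerm n m) (hGB : SigGBUpTo tord mo fs G s)
    (f g : Fin m → MvPolynomial (Fin n) F)
    (hfirr : ∀ f', ¬ RegSigRedStep tord mo fs G f f')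
    (hgirr : ∀ g', ¬ RegSigRedStep tord mo fs G g g')
    (hsf : IsSig mo f s) (hsg : IsSig mo g s) :
    ∃ c : F, c ≠ 0 ∧ phi fs f = c • phi fs g := by
  set a := coeff s.1 (f s.2)
  set b := coeff s.1 (g s.2)
  by_cases hba : b • phi fs f - a • phi fs g = 0
  · refine ⟨b⁻¹ * a, mul_ne_zero (inv_ne_zero hsg.1) hsf.1, ?_⟩
    rw [mul_smul, ← sub_eq_zero.mp hba, inv_smul_smul₀ hsg.1]
  · exfalso
    rw [← phi_smul_sub_smul] at hba
    obtain ⟨σ, hσ⟩ := exists_isSig mo (ne_zero_of_phi_ne_zero hba)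
    obtain ⟨t, ht, g', hg', u, lg, τ, hlg, rfl, hτ, hτs⟩ :=
      hGB.exists_reducer hσ (mlt_of_mem_msupport_smul_sub_smul mo hsf hsg hσ.1) hba
    rw [phi_smul_sub_smul] at ht
    rcases Finset.mem_union.mp (support_sub _ _ _ ht) with htf | htg
    · exact hfirr _ ⟨_, g', hg', u, lg, s, τ, support_smul htf, hlg, rfl, hsf, hτ, hτs, rfl⟩
    · exact hgirr _ ⟨_, g', hg', u, lg, s, τ, support_smul htg, hlg, rfl, hsg, hτ, hτs, rfl⟩

/-- Uniqueness of regularly Sig-irreducible elements of a given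
signature. If `G` is a Sig-Gröbner basis up to `s` and `f, g` are nonzero,
regularly Sig-irreducible w.r.t. `G` with `sig(f) = sig(g) = s`, then
`φ(f) = c·φ(g)` for some nonzero scalar `c`. -/
theorem statement5 {F : Type*} [Field F] {n m : ℕ} (hn : 0 < n) (hm : 0 < m)
    (tord : TermOrder n) (mo : ModOrder n m tord)
    (fs : Fin m → MvPolynomial (Fin n) F) (hfs : ∀ i, fs i ≠ 0)
    (G : Finset (Fin m → MvPolynomial (Fin n) F))
    (hG0 : ∀ g ∈ G, g ≠ 0) (hGphi : ∀ g ∈ G, phi fs g ≠ 0)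
    (s : MTerm n m) (hGB : SigGBUpTo tord mo fs G s)
    (f g : Fin m → MvPolynomial (Fin n) F) (hf : f ≠ 0) (hg : g ≠ 0)
    (hfirr : ∀ f', ¬ RegSigRedStep tord mo fs G f f')
    (hgirr : ∀ g', ¬ RegSigRedStep tord mo fs G g g')
    (hsf : IsSig mo f s) (hsg : IsSig mo g s) :
    ∃ c : F, c ≠ 0 ∧ phi fs f = c • phi fs g :=
  statement5_general tord mo fs G s hGB f g hfirr hgirr hsf hsg
end

section
/- (A Sig-Gröbner basis maps to a Gröbner basis under φ.) Suppose G is a Sig-Gröbner basis, i.e. every nonzero f ∈ P^m Sig-reduces to zero with respect to G. Then φ(G) = { φ(g) : g ∈ G } is a Gröbner basis of the ideal I = ⟨f₁,…,f_m⟩ of P: for every nonzero polynomial p ∈ I there exists g ∈ G with LT(φ(g)) ∣ LT(p). -/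
open MvPolynomial

variable {F : Type*} [Field F] {n m : ℕ}

/-!
Write `p = φ(c)` and let `lp = LT(p)`. By hypothesis `c` Sig-reduces to a syzygy `h`.
A reduction step at a term `t ≠ lp` subtracts a multiple of `X^u·φ(g)`, all of whose terms are
`≤ t`; since `t ≤ lp`, the leading term `lp` and its coefficient survive the step. As `φ(h) = 0`
has no leading term, some step along the chain must reduce `lp` itself, and that step exhibits
`g ∈ G` with `LT(φ(g)) ∣ lp`.
-/

lemma exists_mem_forall_rel_of_isLinearOrder {α : Type*} (r : α → α → Prop)
    [IsLinearOrder α r] (s : Finset α) (hs : s.Nonempty) : ∃ a ∈ s, ∀ b ∈ s, r b a := by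
  induction hs using Finset.Nonempty.cons_induction with
  | singleton x => exact ⟨x, by simp, fun b hb => by simp_all [refl_of r]⟩
  | cons x s _ _ ih =>
    obtain ⟨a, ha, hmax⟩ := ih
    rcases total_of r x a with hxa | hax
    · exact ⟨a, by simp [ha], fun b hb => by
        rcases Finset.mem_cons.mp hb with rfl | hb
        exacts [hxa, hmax b hb]⟩
    · exact ⟨x, by simp, fun b hb => by
        rcases Finset.mem_cons.mp hb with rfl | hb
        exacts [refl_of r _, trans_of r (hmax b hb) hax]⟩

section LeadingTerm

variable (tord : TermOrder n)

lemma exists_isLT {p : MvPolynomial (Fin n) F} (hp : p ≠ 0) : ∃ lp, IsLT tord p lp :=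
  haveI := tord.linear
  exists_mem_forall_rel_of_isLinearOrder tord.le p.support (support_nonempty.mpr hp)

lemma not_isLT_zero (t : Term n) : ¬ IsLT tord (0 : MvPolynomial (Fin n) F) t := by
  simp [IsLT]

variable {tord}

lemma IsLT.le_add_of_mem_support_monomial_mul {q : MvPolynomial (Fin n) F} {lq u s : Term n}
    (hq : IsLT tord q lq) (hs : s ∈ (monomial u (1 : F) * q).support) :
    tord.le s (u + lq) := by
  classical
  have hs' := support_mul _ _ hs
  rw [support_monomial, if_neg one_ne_zero, Finset.singleton_add, Finset.mem_vadd_finset] at hs'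
  obtain ⟨s', hs', rfl⟩ := hs'
  exact tord.add_le_add _ _ _ (hq.2 s' hs')

lemma IsLT.sub_smul {p q : MvPolynomial (Fin n) F} {lp t : Term n} (hp : IsLT tord p lp)
    (htp : tord.le t lp) (ht : t ≠ lp) (hq : ∀ s ∈ q.support, tord.le s t) (c : F) :
    IsLT tord (p - c • q) lp := by
  classical
  have := tord.linear
  have hlpq : coeff lp q = 0 := by
    by_contra hne
    exact ht (antisymm_of tord.le htp (hq lp (mem_support_iff.mpr hne)))
  refine ⟨?_, fun s hs => ?_⟩
  · rw [mem_support_iff, coeff_sub, coeff_smul, hlpq, smul_zero, sub_zero]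
    exact mem_support_iff.mp hp.1
  · rcases Finset.mem_union.mp (support_sub _ _ _ hs) with hs | hs
    · exact hp.2 s hs
    · exact trans_of tord.le (hq s (support_smul hs)) htp

end LeadingTerm

section SigReduction

variable {tord : TermOrder n} {mo : ModOrder n m tord}
  {fs : Fin m → MvPolynomial (Fin n) F} {G : Finset (Fin m → MvPolynomial (Fin n) F)}

lemma phi_sub_smul_tmul (f g : Fin m → MvPolynomial (Fin n) F) (c : F) (u : Term n) :
    phi fs (f - c • tmul u g) = phi fs f - c • (monomial u (1 : F) * phi fs g) := by
  simp only [phi, tmul, Finset.mul_sum, Finset.smul_sum, ← Finset.sum_sub_distrib,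
    Pi.sub_apply, Pi.smul_apply, sub_mul, smul_mul_assoc, mul_assoc]

lemma SigRedStep.dvd_or_isLT {f f' : Fin m → MvPolynomial (Fin n) F} {lp : Term n}
    (hstep : SigRedStep tord mo fs G f f') (hf : IsLT tord (phi fs f) lp) :
    (∃ g ∈ G, ∃ lg, IsLT tord (phi fs g) lg ∧ ∃ u, lp = u + lg) ∨
      IsLT tord (phi fs f') lp := by
  obtain ⟨t, g, hg, u, lg, -, -, ht, hlg, rfl, -, -, -, rfl⟩ := hstep
  by_cases htlp : u + lg = lp
  · exact Or.inl ⟨g, hg, lg, hlg, u, htlp.symm⟩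
  · right
    rw [phi_sub_smul_tmul]
    exact hf.sub_smul (hf.2 _ ht) htlp (fun s hs => hlg.le_add_of_mem_support_monomial_mul hs) _

lemma exists_dvd_isLT_of_reflTransGen {f h : Fin m → MvPolynomial (Fin n) F} {lp : Term n}
    (hfh : Relation.ReflTransGen (SigRedStep tord mo fs G) f h) (hh : phi fs h = 0)
    (hf : IsLT tord (phi fs f) lp) :
    ∃ g ∈ G, ∃ lg, IsLT tord (phi fs g) lg ∧ ∃ u, lp = u + lg := by
  induction hfh using Relation.ReflTransGen.head_induction_on with
  | refl => exact absurd (hh ▸ hf) (not_isLT_zero tord lp)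
  | head hstep _ ih => exact (hstep.dvd_or_isLT hf).elim id ih

end SigReduction

lemma exists_phi_eq_of_mem_span {fs : Fin m → MvPolynomial (Fin n) F}
    {p : MvPolynomial (Fin n) F} (hp : p ∈ Ideal.span (Set.range fs)) :
    ∃ c, phi fs c = p := by
  obtain ⟨c, hc⟩ := (Submodule.mem_span_range_iff_exists_fun _).mp hp
  exact ⟨c, by simpa [phi, smul_eq_mul] using hc⟩

theorem statement9_general {F : Type*} [Field F] {n m : ℕ}
    (tord : TermOrder n) (mo : ModOrder n m tord)
    (fs : Fin m → MvPolynomial (Fin n) F)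
    (G : Finset (Fin m → MvPolynomial (Fin n) F))
    (hGB : ∀ f : Fin m → MvPolynomial (Fin n) F, f ≠ 0 →
      SigReducesToZero tord mo fs G f) :
    ∀ p : MvPolynomial (Fin n) F, p ∈ Ideal.span (Set.range fs) → p ≠ 0 →
      ∃ g ∈ G, ∃ lg lp : Term n, IsLT tord (phi fs g) lg ∧ IsLT tord p lp ∧
        ∃ u : Term n, lp = u + lg := by
  intro p hp hp0
  obtain ⟨c, rfl⟩ := exists_phi_eq_of_mem_span hp
  obtain ⟨lp, hlp⟩ := exists_isLT tord hp0
  have hc0 : c ≠ 0 := by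
    rintro rfl
    simp [phi] at hp0
  obtain ⟨h, hch, hh⟩ := hGB c hc0
  obtain ⟨g, hg, lg, hlg, u, hu⟩ := exists_dvd_isLT_of_reflTransGen hch hh hlp
  exact ⟨g, hg, lg, lp, hlg, hlp, u, hu⟩

/-- A Sig-Gröbner basis maps to a Gröbner basis under `φ`.
If every nonzero `f ∈ P^m` Sig-reduces to zero w.r.t. `G`, then for every nonzero
polynomial `p` in the ideal `⟨f₁,…,f_m⟩` there is `g ∈ G` with `LT(φ(g)) ∣ LT(p)`. -/
theorem statement9 {F : Type*} [Field F] {n m : ℕ} (hn : 0 < n) (hm : 0 < m)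
    (tord : TermOrder n) (mo : ModOrder n m tord)
    (fs : Fin m → MvPolynomial (Fin n) F) (hfs : ∀ i, fs i ≠ 0)
    (G : Finset (Fin m → MvPolynomial (Fin n) F))
    (hG0 : ∀ g ∈ G, g ≠ 0) (hGphi : ∀ g ∈ G, phi fs g ≠ 0)
    (hGB : ∀ f : Fin m → MvPolynomial (Fin n) F, f ≠ 0 →
      SigReducesToZero tord mo fs G f) :
    ∀ p : MvPolynomial (Fin n) F, p ∈ Ideal.span (Set.range fs) → p ≠ 0 →
      ∃ g ∈ G, ∃ lg lp : Term n, IsLT tord (phi fs g) lg ∧ IsLT tord p lp ∧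
        ∃ u : Term n, lp = u + lg :=
  statement9_general tord mo fs G hGB
end
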